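/- Let x : ℤ → A be a uniformly recurrent sequence and y : ℤ → B a periodic sequence (i.e., there exists q > 0 with y(i+q) = y(i) for all i). Then the product sequence x ⊗ y : ℤ → A × B defined by (x ⊗ y)(i) = (x(i), y(i)) is uniformly recurrent. -/

import Mathlib

/-!
Fix a factor `w` of `x`, occurring at `s`, and let `R ⊆ ℤ/q` be the set of residues of its
occurrences. Choose finitely many occurrences representing `R`, all inside some interval
`[a, b]`. Uniform recurrence copies `x[a, b + n)` into every sufficiently long window,
shifted by some `d`; this maps occurrences to occurrences, so translation by `d` sends the
finite set `R` into itself, hence onto itself, and some copied occurrence lies in the residue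
class of `s`. The window length needed depends only on `w` and `s mod q`, which take finitely
many values, so it can be chosen uniformly; periodicity of `y` then makes the second coordinates
agree as well.
-/

open Filter Set

theorem Filter.eventually_forall_of_finite_key {ι κ β : Type*} [Finite κ] {l : Filter β}
    {P : ι → β → Prop} (key : ι → κ) (hkey : ∀ i j, key i = key j → ∀ b, P i b → P j b)
    (h : ∀ i, ∀ᶠ b in l, P i b) : ∀ᶠ b in l, ∀ i, P i b := by
  have hclass : ∀ k : κ, ∀ᶠ b in l, ∀ i, key i = k → P i b := by
    intro k
    by_cases hk : ∃ i, key i = k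
    · obtain ⟨i₀, rfl⟩ := hk
      filter_upwards [h i₀] with b hb i hi using hkey i₀ i hi.symm b hb
    · exact Eventually.of_forall fun b i hi => (hk ⟨i, hi⟩).elim
  filter_upwards [eventually_all.2 hclass] with b hb i using hb (key i) i rfl

theorem Int.exists_add_modEq_of_add_mem {q : ℕ} [NeZero q] {O F : Set ℤ} {d s : ℤ}
    (hrep : ∀ p ∈ O, ∃ p' ∈ F, p' ≡ p [ZMOD q]) (hd : ∀ p ∈ F, p + d ∈ O) (hs : s ∈ O) :
    ∃ p ∈ F, p + d ≡ s [ZMOD q] := by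
  simp only [← ZMod.intCast_eq_intCast_iff] at hrep ⊢
  set R : Set (ZMod q) := (↑) '' O
  have hmaps : MapsTo (· + (d : ZMod q)) R R := by
    rintro _ ⟨p, hp, rfl⟩
    obtain ⟨p', hp'F, hp'⟩ := hrep p hp
    exact ⟨p' + d, hd p' hp'F, by push_cast [hp']; rfl⟩
  have hbij := (R.toFinite.injOn_iff_bijOn_of_mapsTo hmaps).1 (add_left_injective _).injOn
  obtain ⟨_, ⟨p, hp, rfl⟩, hps⟩ := hbij.surjOn (mem_image_of_mem _ hs)
  obtain ⟨p', hp'F, hp'⟩ := hrep p hp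
  exact ⟨p', hp'F, by push_cast [hp']; exact hps⟩

theorem Int.exists_finite_subset_forall_modEq (q : ℕ) [NeZero q] (O : Set ℤ) :
    ∃ F ⊆ O, F.Finite ∧ ∀ p ∈ O, ∃ p' ∈ F, p' ≡ p [ZMOD q] := by
  obtain ⟨F, hFO, hF, hsub⟩ := (exists_subset_image_finite_and
    (f := ((↑) : ℤ → ZMod q)) (s := O) (p := fun t => (↑) '' O ⊆ t)).1
      ⟨_, subset_rfl, toFinite _, subset_rfl⟩
  refine ⟨F, hFO, hF, fun p hp => ?_⟩
  obtain ⟨p', hp'F, hp'⟩ := hsub (mem_image_of_mem _ hp)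
  exact ⟨p', hp'F, (ZMod.intCast_eq_intCast_iff _ _ _).1 hp'⟩

section

variable {α : Type*}

def IsUniformlyRecurrent (z : ℤ → α) : Prop :=
  ∀ n : ℕ, ∃ m : ℕ, ∀ s t : ℤ, ∃ p : ℤ, t ≤ p ∧ p + n ≤ t + m ∧
    ∀ i : ℕ, i < n → z (p + i) = z (s + i)

def RecursModWithin (z : ℤ → α) (q : ℤ) (n : ℕ) (s : ℤ) (m : ℕ) : Prop :=
  ∀ t : ℤ, ∃ p : ℤ, t ≤ p ∧ p + n ≤ t + m ∧ p ≡ s [ZMOD q] ∧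
    ∀ i : ℕ, i < n → z (p + i) = z (s + i)

variable {z : ℤ → α} {q : ℤ} {n : ℕ}

theorem RecursModWithin.mono {s : ℤ} {m m' : ℕ} (h : RecursModWithin z q n s m) (hm : m ≤ m') :
    RecursModWithin z q n s m' := fun t => by
  obtain ⟨p, htp, hpm, hmod, hword⟩ := h t
  exact ⟨p, htp, by omega, hmod, hword⟩

theorem RecursModWithin.of_modEq {s s' : ℤ} {m : ℕ} (h : RecursModWithin z q n s m)
    (hmod : s ≡ s' [ZMOD q]) (hword : ∀ i : ℕ, i < n → z (s + i) = z (s' + i)) :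
    RecursModWithin z q n s' m := fun t => by
  obtain ⟨p, htp, hpm, hpmod, hpword⟩ := h t
  exact ⟨p, htp, hpm, hpmod.trans hmod, fun i hi => (hpword i hi).trans (hword i hi)⟩

theorem IsUniformlyRecurrent.exists_recursModWithin (hz : IsUniformlyRecurrent z) (q : ℕ)
    [NeZero q] (n : ℕ) (s : ℤ) : ∃ m, RecursModWithin z q n s m := by
  set O : Set ℤ := {p | ∀ i : ℕ, i < n → z (p + i) = z (s + i)}
  obtain ⟨F, hFO, hF, hrep⟩ := Int.exists_finite_subset_forall_modEq q O
  obtain ⟨a, b, hab⟩ := bddBelow_bddAbove_iff_subset_Icc.1 ⟨hF.bddBelow, hF.bddAbove⟩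
  obtain ⟨m, hm⟩ := hz ((b - a).toNat + n)
  refine ⟨m, fun t => ?_⟩
  obtain ⟨c, htc, hcm, hcopy⟩ := hm a t
  have hd : ∀ p ∈ F, p + (c - a) ∈ O := by
    intro p hp i hi
    obtain ⟨hap, hpb⟩ := hab hp
    have := hcopy (p - a + i).toNat (by omega)
    rw [← hFO hp i hi, show p + (c - a) + i = c + ((p - a + i).toNat : ℤ) by omega, this]
    congr 1
    omega
  obtain ⟨p, hpF, hmod⟩ := Int.exists_add_modEq_of_add_mem hrep hd (fun _ _ => rfl)
  obtain ⟨hap, hpb⟩ := hab hpF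
  exact ⟨p + (c - a), by omega, by omega, hmod, hd p hpF⟩

theorem IsUniformlyRecurrent.exists_forall_recursModWithin [Finite α]
    (hz : IsUniformlyRecurrent z) (q : ℕ) [NeZero q] (n : ℕ) :
    ∃ m, ∀ s, RecursModWithin z q n s m := by
  have hkey : ∀ s s', (fun i : Fin n => z (s + i), (s : ZMod q)) =
      (fun i : Fin n => z (s' + i), (s' : ZMod q)) →
      ∀ m, RecursModWithin z q n s m → RecursModWithin z q n s' m := by
    intro s s' hss' m h
    simp only [Prod.mk.injEq, funext_iff, Fin.forall_iff] at hss'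
    exact h.of_modEq ((ZMod.intCast_eq_intCast_iff _ _ _).1 hss'.2) hss'.1
  refine (eventually_forall_of_finite_key (l := atTop) _ hkey fun s => ?_).exists
  obtain ⟨m, hm⟩ := hz.exists_recursModWithin q n s
  exact eventually_atTop.2 ⟨m, fun m' hm' => hm.mono hm'⟩

theorem IsUniformlyRecurrent.prod_of_periodic [Finite α] {β : Type*} {x : ℤ → α} {y : ℤ → β}
    (hx : IsUniformlyRecurrent x) {q : ℕ} [NeZero q] (hy : Function.Periodic y q) :
    IsUniformlyRecurrent fun i => (x i, y i) := by
  intro n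
  obtain ⟨m, hm⟩ := hx.exists_forall_recursModWithin q n
  refine ⟨m, fun s t => ?_⟩
  obtain ⟨p, htp, hpm, hmod, hword⟩ := hm s t
  obtain ⟨k, hk⟩ := hmod.symm.dvd
  refine ⟨p, htp, hpm, fun i hi => Prod.ext (hword i hi) ?_⟩
  have hp : p + i = s + i + k * q := by linarith
  exact hp ▸ hy.int_mul k (s + i)

end

theorem stmt_4_general {A B : Type*} [Fintype A] (x : ℤ → A) (y : ℤ → B)
    (hur : ∀ n : ℕ, ∃ m : ℕ, ∀ s t : ℤ, ∃ p : ℤ, t ≤ p ∧ p + n ≤ t + m ∧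
      ∀ i : ℕ, i < n → x (p + i) = x (s + i))
    (q : ℤ) (hq : 0 < q) (hper : ∀ i : ℤ, y (i + q) = y i) :
    ∀ n : ℕ, ∃ m : ℕ, ∀ s t : ℤ, ∃ p : ℤ, t ≤ p ∧ p + n ≤ t + m ∧
      ∀ i : ℕ, i < n → (x (p + i), y (p + i)) = (x (s + i), y (s + i)) := by
  lift q to ℕ using hq.le
  have : NeZero q := ⟨by exact_mod_cast hq.ne'⟩
  exact IsUniformlyRecurrent.prod_of_periodic hur hper

/-- The product of a uniformly recurrent sequence with a periodic sequence is
uniformly recurrent. -/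
theorem stmt_4 {A B : Type*} [Fintype A] [Fintype B] (x : ℤ → A) (y : ℤ → B)
    (hur : ∀ n : ℕ, ∃ m : ℕ, ∀ s t : ℤ, ∃ p : ℤ, t ≤ p ∧ p + n ≤ t + m ∧
      ∀ i : ℕ, i < n → x (p + i) = x (s + i))
    (q : ℤ) (hq : 0 < q) (hper : ∀ i : ℤ, y (i + q) = y i) :
    ∀ n : ℕ, ∃ m : ℕ, ∀ s t : ℤ, ∃ p : ℤ, t ≤ p ∧ p + n ≤ t + m ∧
      ∀ i : ℕ, i < n → (x (p + i), y (p + i)) = (x (s + i), y (s + i)) :=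
  stmt_4_general x y hur q hq hper
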